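/- If λ ≠ 0, then the only solution in L^p[0,1] to the integro-differential equation λ f'(x) = 2 f(x) + β (β a real constant determined by a Fredholm condition), arising from λf = Af with A the constrained selection gradient, is f = 0; i.e., A has no nonzero eigenvalues. -/

import Mathlib

/-!
On `L²[0, 1]` the selection gradient `∇E` is skew-adjoint: with `G' = g`, the integrand
`g · ∇E(g) = g (2G − G(1))` is the derivative of `G² − G(1) G`, which takes the same value at
both endpoints. An eigenfunction of `A` is a.e. equal to the continuous function `Af / λ`, so it
lies in `L²`. Writing `Ag = ∇E(g) − c (x − 1/2)`, pairing `λg = Ag` with `x − 1/2` (of squared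
norm `1/12`) gives `λ w(g) = (1 − heav(w(g))) ⟨x − 1/2, ∇E(g)⟩`, so `c · w(g) = 0`; pairing it
with `g` then gives `λ ‖g‖² = −c · w(g) = 0`.
-/

open MeasureTheory intervalIntegral ENNReal

/-- The selection gradient `∇E(f)(x) = ∫₀ˣ f − ∫ₓ¹ f`. -/
noncomputable def gradE (f : ℝ → ℝ) (x : ℝ) : ℝ :=
  (∫ y in (0:ℝ)..x, f y) - ∫ y in x..(1:ℝ), f y

noncomputable def heav (t : ℝ) : ℝ := if 0 ≤ t then 1 else 0

/-- The MCA-constraint functional `w(f) = ∫₀¹ (x − 1/2) f(x) dx`. -/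
noncomputable def wfun (f : ℝ → ℝ) : ℝ := ∫ x in (0:ℝ)..1, (x - 1/2) * f x

/-- The constrained selection gradient `A`. -/
noncomputable def Aop (f : ℝ → ℝ) (x : ℝ) : ℝ :=
  gradE f x - 12 * heav (wfun f) * (x - 1/2) *
    ∫ y in (0:ℝ)..1, (y - 1/2) * gradE f y

open Set

noncomputable def constraintCoeff (f : ℝ → ℝ) : ℝ :=
  12 * heav (wfun f) * ∫ y in (0:ℝ)..1, (y - 1/2) * gradE f y

lemma Aop_eq (f : ℝ → ℝ) (x : ℝ) : Aop f x = gradE f x - constraintCoeff f * (x - 1/2) := by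
  rw [Aop, constraintCoeff]
  ring

section Congr

variable {f g : ℝ → ℝ}

lemma gradE_congr (h : f =ᵐ[volume.restrict (Icc 0 1)] g) {x : ℝ} (hx : x ∈ Icc (0:ℝ) 1) :
    gradE f x = gradE g x := by
  have hsub : ∀ {a b : ℝ}, a ∈ Icc (0:ℝ) 1 → b ∈ Icc (0:ℝ) 1 →
      ∫ y in a..b, f y = ∫ y in a..b, g y := fun ha hb =>
    integral_congr_ae_restrict
      (ae_restrict_of_ae_restrict_of_subset (uIoc_subset_uIcc.trans (uIcc_subset_Icc ha hb)) h)
  rw [gradE, gradE, hsub (left_mem_Icc.2 zero_le_one) hx, hsub hx (right_mem_Icc.2 zero_le_one)]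

lemma wfun_congr (h : f =ᵐ[volume.restrict (Icc 0 1)] g) : wfun f = wfun g := by
  refine integral_congr_ae_restrict ?_
  have hsub : uIoc (0:ℝ) 1 ⊆ Icc 0 1 := uIoc_subset_uIcc.trans (uIcc_of_le zero_le_one).subset
  filter_upwards [ae_restrict_of_ae_restrict_of_subset hsub h] with x hx
  rw [hx]

lemma Aop_congr (h : f =ᵐ[volume.restrict (Icc 0 1)] g) {x : ℝ} (hx : x ∈ Icc (0:ℝ) 1) :
    Aop f x = Aop g x := by
  have hint : ∫ y in (0:ℝ)..1, (y - 1/2) * gradE f y = ∫ y in (0:ℝ)..1, (y - 1/2) * gradE g y :=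
    integral_congr fun y hy => by
      rw [uIcc_of_le zero_le_one] at hy
      rw [gradE_congr h hy]
  rw [Aop, Aop, gradE_congr h hx, wfun_congr h, hint]

end Congr

lemma continuous_gradE {f : ℝ → ℝ} (hf : ∀ a b : ℝ, IntervalIntegrable f volume a b) :
    Continuous (gradE f) := by
  have h : gradE f = fun x => (∫ y in (0:ℝ)..x, f y) + ∫ y in (1:ℝ)..x, f y := by
    ext x
    rw [gradE, integral_symm x 1, sub_eq_add_neg]
  rw [h]
  exact (continuous_primitive hf 0).add (continuous_primitive hf 1)

lemma continuous_Aop {f : ℝ → ℝ} (hf : ∀ a b : ℝ, IntervalIntegrable f volume a b) :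
    Continuous (Aop f) := by
  have h := continuous_gradE hf
  simp only [funext (Aop_eq f)]
  fun_prop

lemma exists_continuous_ae_eq_of_Aop_ae_eq {f : ℝ → ℝ} {lam : ℝ}
    (hf : IntegrableOn f (Icc 0 1)) (hlam : lam ≠ 0)
    (heig : Aop f =ᵐ[volume.restrict (Icc 0 1)] fun x => lam * f x) :
    ∃ g : ℝ → ℝ, Continuous g ∧ f =ᵐ[volume.restrict (Icc 0 1)] g ∧
      ∀ x ∈ Icc (0:ℝ) 1, Aop g x = lam * g x := by
  -- `f` need not be integrable off `[0, 1]`, so work with `f₀`, whose `A f₀` is continuous on `ℝ`.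
  set f₀ := (Icc (0:ℝ) 1).indicator f
  have hf₀ : f₀ =ᵐ[volume.restrict (Icc 0 1)] f := indicator_ae_eq_restrict measurableSet_Icc
  have hf₀int : ∀ a b : ℝ, IntervalIntegrable f₀ volume a b := fun a b =>
    ((integrable_indicator_iff measurableSet_Icc).2 hf).intervalIntegrable
  have hfg : f =ᵐ[volume.restrict (Icc 0 1)] fun x => Aop f₀ x / lam := by
    filter_upwards [heig, ae_restrict_mem measurableSet_Icc] with x hx hxI
    rw [Aop_congr hf₀ hxI, hx, mul_div_cancel_left₀ _ hlam]
  refine ⟨_, (continuous_Aop hf₀int).div_const lam, hfg, fun x hx => ?_⟩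
  rw [← Aop_congr hfg hx, ← Aop_congr hf₀ hx, mul_div_cancel₀ _ hlam]

lemma integral_mul_gradE_self {g : ℝ → ℝ} (hg : Continuous g) :
    ∫ x in (0:ℝ)..1, g x * gradE g x = 0 := by
  set G : ℝ → ℝ := fun x => ∫ t in (0:ℝ)..x, g t
  have hG : ∀ x, HasDerivAt G (g x) x := fun x =>
    (hg.integral_hasStrictDerivAt 0 x).hasDerivAt
  have hgrad : ∀ x, gradE g x = 2 * G x - G 1 := fun x => by
    rw [gradE,
      ← integral_interval_sub_left (hg.intervalIntegrable 0 1) (hg.intervalIntegrable 0 x)]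
    ring
  have hG0 : G 0 = 0 := integral_same
  calc ∫ x in (0:ℝ)..1, g x * gradE g x
      = (G 1 ^ 2 - G 1 * G 1) - (G 0 ^ 2 - G 1 * G 0) :=
        integral_eq_sub_of_hasDerivAt (f := fun x => G x ^ 2 - G 1 * G x)
          (fun x _ => (((hG x).pow 2).sub ((hG x).const_mul (G 1))).congr_deriv
            (by rw [hgrad]; ring))
          ((hg.mul (continuous_gradE hg.intervalIntegrable)).intervalIntegrable 0 1)
    _ = 0 := by rw [hG0]; ring

lemma integral_sub_half_mul_sub_half : ∫ x in (0:ℝ)..1, (x - 1/2) * (x - 1/2) = 1/12 := by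
  rw [integral_comp_sub_right fun x => x * x]
  norm_num [← sq, integral_pow]

section Eigenfunction

variable {g : ℝ → ℝ} {lam : ℝ}

lemma integral_mul_eq_of_Aop_eq (hg : Continuous g)
    (heig : ∀ x ∈ Icc (0:ℝ) 1, Aop g x = lam * g x) {u : ℝ → ℝ} (hu : Continuous u) :
    lam * ∫ x in (0:ℝ)..1, u x * g x =
      (∫ x in (0:ℝ)..1, u x * gradE g x) -
        constraintCoeff g * ∫ x in (0:ℝ)..1, u x * (x - 1/2) := by
  have hgrad := continuous_gradE hg.intervalIntegrable
  rw [← intervalIntegral.integral_const_mul, ← intervalIntegral.integral_const_mul,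
    ← integral_sub (Continuous.intervalIntegrable (by fun_prop) 0 1)
      (Continuous.intervalIntegrable (by fun_prop) 0 1)]
  refine integral_congr fun x hx => ?_
  rw [uIcc_of_le zero_le_one] at hx
  have hx' := heig x hx
  rw [Aop_eq] at hx'
  linear_combination (-u x) * hx'

lemma constraintCoeff_mul_wfun_eq_zero (hg : Continuous g) (hlam : lam ≠ 0)
    (heig : ∀ x ∈ Icc (0:ℝ) 1, Aop g x = lam * g x) :
    constraintCoeff g * wfun g = 0 := by
  by_cases hw : 0 ≤ wfun g
  · have hc : constraintCoeff g = 12 * ∫ y in (0:ℝ)..1, (y - 1/2) * gradE g y := by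
      simp [constraintCoeff, heav, hw]
    have h := integral_mul_eq_of_Aop_eq hg heig (u := fun x => x - 1/2) (by fun_prop)
    rw [integral_sub_half_mul_sub_half, hc, ← wfun] at h
    have : lam * wfun g = 0 := by linarith
    simp [(mul_eq_zero.1 this).resolve_left hlam]
  · simp [constraintCoeff, heav, hw]

lemma ae_eq_zero_of_Aop_eq (hg : Continuous g) (hlam : lam ≠ 0)
    (heig : ∀ x ∈ Icc (0:ℝ) 1, Aop g x = lam * g x) :
    g =ᵐ[volume.restrict (Icc 0 1)] 0 := by
  have h := integral_mul_eq_of_Aop_eq hg heig hg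
  have hw : ∫ x in (0:ℝ)..1, g x * (x - 1/2) = wfun g :=
    integral_congr fun x _ => mul_comm _ _
  rw [integral_mul_gradE_self hg, hw, constraintCoeff_mul_wfun_eq_zero hg hlam heig,
    sub_zero, mul_eq_zero] at h
  have hsq : ∫ x in (0:ℝ)..1, g x * g x = 0 := h.resolve_left hlam
  rw [integral_eq_zero_iff_of_le_of_nonneg_ae zero_le_one
      (ae_of_all _ fun x => mul_self_nonneg (g x)) ((hg.mul hg).intervalIntegrable 0 1),
    Measure.restrict_congr_set Ioc_ae_eq_Icc] at hsq
  filter_upwards [hsq] with x hx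
  exact mul_self_eq_zero.1 hx

end Eigenfunction

/-- `A` has no nonzero eigenvalues: if `λ ≠ 0` and `Af = λf` in `L^p[0,1]`,
then `f = 0`. -/
theorem stmt7 (p : ℝ≥0∞) (hp : 1 ≤ p) (f : ℝ → ℝ) (lam : ℝ) (hlam : lam ≠ 0)
    (hf : MemLp f p (volume.restrict (Set.Icc (0:ℝ) 1)))
    (heig : Aop f =ᵐ[volume.restrict (Set.Icc (0:ℝ) 1)] (fun x => lam * f x)) :
    f =ᵐ[volume.restrict (Set.Icc (0:ℝ) 1)] (fun _ => (0:ℝ)) := by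
  obtain ⟨g, hg, hfg, hgeig⟩ :=
    exists_continuous_ae_eq_of_Aop_ae_eq (hf.integrable hp) hlam heig
  exact hfg.trans (ae_eq_zero_of_Aop_eq hg hlam hgeig)
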